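/- Suppose X, W ∈ ℝ^{2×2} are symmetric positive definite, Y ∈ ℝ^{1×2}, and γ > 0 are such that the robust LMIs hold. Then for every η in the uncertainty simplex Ω, every solution x of the closed-loop delay system for η with feedback F = YX⁻¹ converges to zero: ‖x(t)‖ → 0 as t → ∞. -/

import Mathlib

open Matrix

noncomputable section

/-- A real matrix is negative definite if its negation is positive definite. -/
def NegDef {n : Type*} [Fintype n] (M : Matrix n n ℝ) : Prop := (-M).PosDef

/-- The robust LMIs: for every vertex `i`, the block matrix
`[[Θ_i, A_dX, Γ],[XA_dᵀ, −W, 0],[Γᵀ, 0, −γI_q]]` is negative definite, where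
`Θ_i = A_iX + XA_iᵀ + B_iY + YᵀB_iᵀ + W` and `Γ = XGᵀ + YᵀHᵀ`. -/
def RobustLMI (μ q : ℕ) (A : Fin μ → Matrix (Fin 2) (Fin 2) ℝ)
    (B : Fin μ → Matrix (Fin 2) (Fin 1) ℝ) (Ad : Matrix (Fin 2) (Fin 2) ℝ)
    (G : Matrix (Fin q) (Fin 2) ℝ) (H : Matrix (Fin q) (Fin 1) ℝ)
    (X W : Matrix (Fin 2) (Fin 2) ℝ) (Y : Matrix (Fin 1) (Fin 2) ℝ) (γ : ℝ) : Prop :=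
  ∀ i : Fin μ,
    NegDef (Matrix.fromBlocks
      (Matrix.fromBlocks
        (A i * X + X * (A i)ᵀ + B i * Y + Yᵀ * (B i)ᵀ + W) (Ad * X)
        (X * Adᵀ) (-W))
      (Matrix.fromRows (X * Gᵀ + Yᵀ * Hᵀ) 0)
      (Matrix.fromCols (X * Gᵀ + Yᵀ * Hᵀ)ᵀ 0)
      (-(γ • (1 : Matrix (Fin q) (Fin q) ℝ))))

/-- Membership in the uncertainty simplex `Ω`. -/
def InSimplex (μ : ℕ) (η : Fin μ → ℝ) : Prop :=
  (∀ i, 0 ≤ η i) ∧ ∑ i, η i = 1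

/-- `x` is a solution of the closed-loop delay system
`x'(t) = (A(η) + B(η)F)x(t) + A_d x(t−τ)` for `t ≥ 0`, continuous on `[−τ,∞)`,
where `A(η) = Σᵢ ηᵢAᵢ` and `B(η) = Σᵢ ηᵢBᵢ`. -/
def IsClosedLoopSolution (μ : ℕ) (A : Fin μ → Matrix (Fin 2) (Fin 2) ℝ)
    (B : Fin μ → Matrix (Fin 2) (Fin 1) ℝ) (Ad : Matrix (Fin 2) (Fin 2) ℝ)
    (F : Matrix (Fin 1) (Fin 2) ℝ) (τ : ℝ) (η : Fin μ → ℝ)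
    (x : ℝ → EuclideanSpace ℝ (Fin 2)) : Prop :=
  ContinuousOn x (Set.Ici (-τ)) ∧
    ∀ t ≥ (0:ℝ), HasDerivAt x
      ((WithLp.toLp 2 (((∑ i, η i • A i) + (∑ i, η i • B i) * F) *ᵥ (x t) + Ad *ᵥ (x (t - τ))) :
        EuclideanSpace ℝ (Fin 2))) t

/-!
Put `P = X⁻¹`, `Q = X⁻¹ W X⁻¹`, `A_c = A(η) + B(η) F` and take the Lyapunov–Krasovskii
functional `V(t) = x(t)ᵀ P x(t) + ∫_{t-τ}^t x(s)ᵀ Q x(s) ds`. Along a solution, `V'(t)` is the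
quadratic form of `[[P A_c + A_cᵀ P + Q, P A_d], [A_dᵀ P, -Q]]` at `(x(t), x(t-τ))`. This matrix
is the congruence by `diag(P, P)` of the `η`-average of the upper-left `4 × 4` blocks of the
vertex LMIs, so it is negative definite and `V' ≤ -ε ‖x‖²`. Hence `V` decreases to a limit and
`‖x‖²` is integrable on `[0, ∞)`; the delay integral in `V` then tends to `0`, so `xᵀ P x` has a
limit, which must be `0` because `xᵀ P x ≤ C ‖x‖²` is integrable too. Finally `xᵀ P x ≥ c ‖x‖²`.
-/

open Filter Set MeasureTheory Topology

theorem Matrix.sum_fromBlocks {ι n m k l α : Type*} [AddCommMonoid α] (s : Finset ι)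
    (A : ι → Matrix n k α) (B : ι → Matrix n l α) (C : ι → Matrix m k α) (D : ι → Matrix m l α) :
    ∑ i ∈ s, fromBlocks (A i) (B i) (C i) (D i)
      = fromBlocks (∑ i ∈ s, A i) (∑ i ∈ s, B i) (∑ i ∈ s, C i) (∑ i ∈ s, D i) := by
  ext (i | i) (j | j) <;> simp [Matrix.sum_apply]

section QuadraticBounds

open MatrixOrder

variable {n : Type*} [Fintype n] [DecidableEq n]

theorem Matrix.IsHermitian.exists_dotProduct_mulVec_le {S : Matrix n n ℝ} (hS : S.IsHermitian) :
    ∃ C, ∀ v, v ⬝ᵥ S *ᵥ v ≤ C * (v ⬝ᵥ v) := by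
  obtain ⟨C, hC⟩ :=
    (isCompact_iff_compactSpace.mpr inferInstance : IsCompact (spectrum ℝ S)).bddAbove
  have hle : S ≤ algebraMap ℝ (Matrix n n ℝ) C := le_algebraMap_of_spectrum_le fun x hx => hC hx
  refine ⟨C, fun v => ?_⟩
  simpa [Algebra.algebraMap_eq_smul_one, sub_mulVec, dotProduct_sub, smul_mulVec] using
    (Matrix.le_iff.mp hle).dotProduct_mulVec_nonneg v

theorem Matrix.PosDef.exists_pos_mul_dotProduct_le {S : Matrix n n ℝ} (hS : S.PosDef) :
    ∃ c > 0, ∀ v, c * (v ⬝ᵥ v) ≤ v ⬝ᵥ S *ᵥ v := by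
  cases isEmpty_or_nonempty n
  · exact ⟨1, one_pos, fun v => by simp [dotProduct]⟩
  obtain ⟨c, hc, hle⟩ : ∃ c > 0, algebraMap ℝ (Matrix n n ℝ) c ≤ S :=
    (CFC.exists_pos_algebraMap_le_iff hS.isStrictlyPositive.isSelfAdjoint).2
      fun _ hx => hS.isStrictlyPositive.spectrum_pos hx
  refine ⟨c, hc, fun v => ?_⟩
  simpa [Algebra.algebraMap_eq_smul_one, sub_mulVec, dotProduct_sub, smul_mulVec] using
    (Matrix.le_iff.mp hle).dotProduct_mulVec_nonneg v

end QuadraticBounds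

namespace NegDef

variable {n m : Type*} [Fintype n] [Fintype m]

theorem fromBlocks₁₁ {A : Matrix n n ℝ} {B : Matrix n m ℝ} {C : Matrix m n ℝ} {D : Matrix m m ℝ}
    (h : NegDef (fromBlocks A B C D)) : NegDef A := by
  have hA : (-fromBlocks A B C D).submatrix Sum.inl Sum.inl = -A := by ext; simp
  unfold NegDef at h ⊢
  exact hA ▸ h.submatrix Sum.inl_injective

theorem sum_smul {μ : ℕ} {η : Fin μ → ℝ} (hη : InSimplex μ η) {M : Fin μ → Matrix n n ℝ}
    (hM : ∀ i, NegDef (M i)) : NegDef (∑ i, η i • M i) := by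
  classical
  obtain ⟨hη0, hη1⟩ := hη
  obtain ⟨j, hj⟩ : ∃ j, η j ≠ 0 := by
    by_contra! h
    simp [h] at hη1
  unfold NegDef
  rw [← Finset.sum_neg_distrib,
    ← Finset.sum_filter_of_ne (p := fun i => η i ≠ 0) fun i _ hi h0 => hi (by simp [h0])]
  refine Matrix.posDef_sum ⟨j, by simpa using hj⟩ fun i hi => ?_
  rw [← smul_neg]
  exact (hM i).smul (lt_of_le_of_ne (hη0 i) (Finset.mem_filter.1 hi).2.symm)

theorem conj [DecidableEq n] {M U : Matrix n n ℝ} (hM : NegDef M) (hU : IsUnit U) :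
    NegDef (Uᵀ * M * U) := by
  have := (Matrix.IsUnit.posDef_star_left_conjugate_iff hU).2 hM
  simpa [NegDef, star_eq_conjTranspose] using this

end NegDef

section Calculus

variable {n : Type*} [Fintype n]

theorem HasDerivAt.dotProduct {u v : ℝ → n → ℝ} {u' v' : n → ℝ} {t : ℝ}
    (hu : HasDerivAt u u' t) (hv : HasDerivAt v v' t) :
    HasDerivAt (fun s => u s ⬝ᵥ v s) (u' ⬝ᵥ v t + u t ⬝ᵥ v') t := by
  rw [hasDerivAt_pi] at hu hv
  exact (HasDerivAt.fun_sum fun i (_ : i ∈ Finset.univ) => (hu i).mul (hv i)).congr_deriv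
    (by simp only [Finset.sum_add_distrib]; rfl)

theorem HasDerivAt.mulVec (S : Matrix n n ℝ) {u : ℝ → n → ℝ} {u' : n → ℝ} {t : ℝ}
    (hu : HasDerivAt u u' t) : HasDerivAt (fun s => S *ᵥ u s) (S *ᵥ u') t :=
  (LinearMap.toContinuousLinearMap S.mulVecLin).hasFDerivAt.comp_hasDerivAt t hu

end Calculus

theorem antitoneOn_Ici_of_hasDerivAt_nonpos {f f' : ℝ → ℝ} {a : ℝ}
    (hf : ∀ t ≥ a, HasDerivAt f (f' t) t) (hf' : ∀ t ≥ a, f' t ≤ 0) : AntitoneOn f (Ici a) :=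
  antitoneOn_of_hasDerivWithinAt_nonpos (convex_Ici a)
    (fun t ht => (hf t ht).continuousAt.continuousWithinAt)
    (fun t ht => (hf t (interior_subset ht)).hasDerivWithinAt)
    fun t ht => hf' t (interior_subset ht)

theorem AntitoneOn.exists_tendsto_atTop {f : ℝ → ℝ} {a : ℝ} (hf : AntitoneOn f (Ici a))
    (hb : BddBelow (f '' Ici a)) : ∃ L, Tendsto f atTop (𝓝 L) := by
  have hanti : Antitone fun t => f (max t a) := fun s t hst =>
    hf (le_max_right s a) (le_max_right t a) (max_le_max hst le_rfl)
  have hbdd : BddBelow (range fun t => f (max t a)) :=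
    hb.mono (range_subset_iff.2 fun t => mem_image_of_mem f (le_max_right t a))
  refine ⟨_, (tendsto_atTop_ciInf hanti hbdd).congr' ?_⟩
  filter_upwards [eventually_ge_atTop a] with t ht
  rw [max_eq_left ht]

theorem Continuous.hasDerivAt_intervalIntegral_sub {f : ℝ → ℝ} (hf : Continuous f) (τ t : ℝ) :
    HasDerivAt (fun t => ∫ s in t - τ..t, f s) (f t - f (t - τ)) t := by
  have hF : ∀ t, HasDerivAt (fun t => ∫ s in (0 : ℝ)..t, f s) (f t) t := fun t =>
    (hf.integral_hasStrictDerivAt 0 t).hasDerivAt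
  have hsplit : (fun t => ∫ s in t - τ..t, f s)
      = fun t => (∫ s in (0 : ℝ)..t, f s) - ∫ s in (0 : ℝ)..(t - τ), f s := by
    ext t
    rw [intervalIntegral.integral_interval_sub_left (hf.intervalIntegrable _ _)
      (hf.intervalIntegrable _ _)]
  rw [hsplit]
  exact (hF t).sub (by simpa using (hF (t - τ)).comp t ((hasDerivAt_id t).sub_const τ) :
    HasDerivAt ((fun t => ∫ s in (0 : ℝ)..t, f s) ∘ fun t => t - τ) _ t)

theorem integrableOn_Ioi_of_hasDerivAt_le_neg {V V' n : ℝ → ℝ} {a : ℝ} (hn : Continuous n)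
    (hn0 : ∀ t, 0 ≤ n t) (hV : ∀ t ≥ a, HasDerivAt V (V' t) t) (hV' : ∀ t ≥ a, V' t ≤ -n t)
    (hV0 : ∀ t ≥ a, 0 ≤ V t) : IntegrableOn n (Ioi a) := by
  have hanti : AntitoneOn (fun t => V t + ∫ s in a..t, n s) (Ici a) :=
    antitoneOn_Ici_of_hasDerivAt_nonpos
      (fun t ht => (hV t ht).add (hn.integral_hasStrictDerivAt a t).hasDerivAt)
      fun t ht => by linarith [hV' t ht]
  refine integrableOn_Ioi_of_intervalIntegral_norm_bounded (V a) a
    (fun t => hn.integrableOn_Ioc) tendsto_id ?_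
  filter_upwards [eventually_ge_atTop a] with t ht
  have := hanti self_mem_Ici ht ht
  simp only [intervalIntegral.integral_same, add_zero] at this
  simp only [Real.norm_of_nonneg (hn0 _), id]
  linarith [hV0 t ht]

section IntegrableOnIoi

variable {E : Type*} [NormedAddCommGroup E]

theorem eq_zero_of_tendsto_of_integrableOn_Ioi {f : ℝ → E} {a : ℝ} {L : E}
    (hf : IntegrableOn f (Ioi a)) (hL : Tendsto f atTop (𝓝 L)) : L = 0 := by
  by_contra hL0
  obtain ⟨T, hT⟩ := eventually_atTop.1 <|
    (hL.norm.eventually (lt_mem_nhds (half_lt_self (norm_pos_iff.2 hL0))))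
  have hconst : IntegrableOn (fun _ => ‖L‖ / 2) (Ioi (max a T)) :=
    (hf.mono_set (Ioi_subset_Ioi (le_max_left a T))).norm.mono' aestronglyMeasurable_const <|
      (ae_restrict_mem measurableSet_Ioi).mono fun t ht => by
        rw [Real.norm_of_nonneg (by positivity)]
        exact (hT t ((le_max_right a T).trans (le_of_lt ht))).le
  rw [integrableOn_const_iff] at hconst
  simp [hL0, Real.volume_Ioi] at hconst

theorem tendsto_intervalIntegral_sub_atTop [NormedSpace ℝ E] {f : ℝ → E} {a : ℝ}
    (hf : IntegrableOn f (Ioi a)) (τ : ℝ) :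
    Tendsto (fun t => ∫ s in t - τ..t, f s) atTop (𝓝 0) := by
  have hshift : Tendsto (fun t : ℝ => t - τ) atTop atTop :=
    tendsto_atTop_add_const_right _ _ tendsto_id
  have h := (intervalIntegral_tendsto_integral_Ioi a hf tendsto_id).sub
    (intervalIntegral_tendsto_integral_Ioi a hf hshift)
  rw [sub_self] at h
  refine h.congr' ?_
  filter_upwards [eventually_ge_atTop (a + τ), eventually_ge_atTop a] with t ht ht'
  have hii : ∀ b ≥ a, IntervalIntegrable f volume a b := fun b hb =>
    (intervalIntegrable_iff_integrableOn_Ioc_of_le hb).2 (hf.mono_set Ioc_subset_Ioi_self)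
  exact intervalIntegral.integral_interval_sub_left (hii t ht') (hii (t - τ) (by linarith))

end IntegrableOnIoi

theorem tendsto_zero_of_lyapunovKrasovskii {n g f d : ℝ → ℝ} {τ ε c C K : ℝ} (hτ : 0 ≤ τ)
    (hε : 0 < ε) (hc : 0 < c) (hn : Continuous n) (hf : Continuous f) (hn0 : ∀ t, 0 ≤ n t)
    (hf0 : ∀ t, 0 ≤ f t) (hfn : ∀ t, f t ≤ K * n t) (hgn : ∀ t, c * n t ≤ g t)
    (hng : ∀ t, g t ≤ C * n t) (hg : ∀ t ≥ 0, HasDerivAt g (d t) t)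
    (hd : ∀ t ≥ 0, d t + (f t - f (t - τ)) ≤ -(ε * n t)) :
    Tendsto n atTop (𝓝 0) := by
  set V := fun t => g t + ∫ s in t - τ..t, f s
  have hV : ∀ t ≥ 0, HasDerivAt V (d t + (f t - f (t - τ))) t := fun t ht =>
    (hg t ht).add (hf.hasDerivAt_intervalIntegral_sub τ t)
  have hg0 : ∀ t, 0 ≤ g t := fun t => (mul_nonneg hc.le (hn0 t)).trans (hgn t)
  have hV0 : ∀ t, 0 ≤ V t := fun t =>
    add_nonneg (hg0 t) (intervalIntegral.integral_nonneg (by linarith) fun s _ => hf0 s)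
  have hnI : IntegrableOn n (Ioi 0) := by
    have := integrableOn_Ioi_of_hasDerivAt_le_neg (hn.const_mul ε)
      (fun t => mul_nonneg hε.le (hn0 t)) hV hd fun t _ => hV0 t
    simpa [hε.ne', IntegrableOn] using this.const_mul ε⁻¹
  have hgI : IntegrableOn g (Ioi 0) :=
    (hnI.const_mul C).mono'
      ((HasDerivAt.continuousOn fun t ht => hg t (le_of_lt ht)).aestronglyMeasurable
        measurableSet_Ioi)
      (Eventually.of_forall fun t => by rw [Real.norm_of_nonneg (hg0 t)]; exact hng t)
  have hfI : IntegrableOn f (Ioi 0) :=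
    (hnI.const_mul K).mono' hf.aestronglyMeasurable
      (Eventually.of_forall fun t => by rw [Real.norm_of_nonneg (hf0 t)]; exact hfn t)
  obtain ⟨L, hL⟩ : ∃ L, Tendsto V atTop (𝓝 L) :=
    (antitoneOn_Ici_of_hasDerivAt_nonpos hV fun t ht =>
      (hd t ht).trans (neg_nonpos.2 (mul_nonneg hε.le (hn0 t)))).exists_tendsto_atTop
      ⟨0, forall_mem_image.2 fun t _ => hV0 t⟩
  have hgL : Tendsto g atTop (𝓝 L) := by
    simpa [V] using hL.sub (tendsto_intervalIntegral_sub_atTop hfI τ)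
  obtain rfl := eq_zero_of_tendsto_of_integrableOn_Ioi hgI hgL
  refine tendsto_of_tendsto_of_tendsto_of_le_of_le tendsto_const_nhds
    (by simpa using hgL.const_mul c⁻¹) hn0 fun t => ?_
  rw [le_inv_mul_iff₀ hc]
  exact hgn t

section LMI

variable {n m : Type*} [Fintype n] [Fintype m]

def lmiBlock (Ad X W : Matrix n n ℝ) (Y : Matrix m n ℝ) (A : Matrix n n ℝ) (B : Matrix n m ℝ) :
    Matrix (n ⊕ n) (n ⊕ n) ℝ :=
  fromBlocks (A * X + X * Aᵀ + B * Y + Yᵀ * Bᵀ + W) (Ad * X) (X * Adᵀ) (-W)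

def krasovskiiMatrix (P Q Ac Ad : Matrix n n ℝ) : Matrix (n ⊕ n) (n ⊕ n) ℝ :=
  fromBlocks (P * Ac + Acᵀ * P + Q) (P * Ad) (Adᵀ * P) (-Q)

theorem sum_smul_lmiBlock {μ : ℕ} {η : Fin μ → ℝ} (hη : ∑ i, η i = 1) (Ad X W : Matrix n n ℝ)
    (Y : Matrix m n ℝ) (A : Fin μ → Matrix n n ℝ) (B : Fin μ → Matrix n m ℝ) :
    ∑ i, η i • lmiBlock Ad X W Y (A i) (B i)
      = lmiBlock Ad X W Y (∑ i, η i • A i) (∑ i, η i • B i) := by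
  simp only [lmiBlock, fromBlocks_smul, Matrix.sum_fromBlocks]
  congr 1 <;> simp [smul_add, Finset.sum_add_distrib, Matrix.sum_mul, Matrix.mul_sum,
    transpose_sum, Matrix.smul_mul, Matrix.mul_smul, ← Finset.sum_smul, hη]

theorem lmiBlock_conj [DecidableEq n] {X : Matrix n n ℝ} (hX : X.PosDef) (Ad W : Matrix n n ℝ)
    (Y : Matrix m n ℝ) (A : Matrix n n ℝ) (B : Matrix n m ℝ) :
    (fromBlocks X⁻¹ 0 0 X⁻¹)ᵀ * lmiBlock Ad X W Y A B * fromBlocks X⁻¹ 0 0 X⁻¹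
      = krasovskiiMatrix X⁻¹ (X⁻¹ * W * X⁻¹) (A + B * (Y * X⁻¹)) Ad := by
  have hdet : IsUnit X.det := (isUnit_iff_isUnit_det X).mp hX.isUnit
  have hPT : X⁻¹ᵀ = X⁻¹ := by
    rw [transpose_nonsing_inv, ← conjTranspose_eq_transpose_of_trivial, hX.isHermitian.eq]
  have hPX : ∀ M : Matrix n n ℝ, X⁻¹ * (X * M) = M := fun M => by
    rw [← Matrix.mul_assoc, nonsing_inv_mul X hdet, Matrix.one_mul]
  simp only [lmiBlock, krasovskiiMatrix, fromBlocks_transpose, hPT, transpose_zero,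
    fromBlocks_multiply]
  congr 1
  · simp [Matrix.mul_add, Matrix.add_mul, Matrix.mul_assoc, hPX, transpose_mul, hPT,
      mul_nonsing_inv X hdet]
    abel
  all_goals simp [Matrix.mul_assoc, hPX, mul_nonsing_inv X hdet]

theorem dotProduct_krasovskiiMatrix (P Q Ac Ad : Matrix n n ℝ) (u v : n → ℝ) :
    (u ⊕ᵥ v) ⬝ᵥ krasovskiiMatrix P Q Ac Ad *ᵥ (u ⊕ᵥ v)
      = (Ac *ᵥ u + Ad *ᵥ v) ⬝ᵥ P *ᵥ u + u ⬝ᵥ P *ᵥ (Ac *ᵥ u + Ad *ᵥ v)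
        + (u ⬝ᵥ Q *ᵥ u - v ⬝ᵥ Q *ᵥ v) := by
  have htr : ∀ (M : Matrix n n ℝ) (a b : n → ℝ), a ⬝ᵥ Mᵀ *ᵥ b = (M *ᵥ a) ⬝ᵥ b := fun M a b => by
    rw [dotProduct_mulVec, vecMul_transpose]
  simp only [krasovskiiMatrix, fromBlocks_mulVec, sumElim_dotProduct_sumElim, Sum.elim_comp_inl,
    Sum.elim_comp_inr, add_mulVec, neg_mulVec, dotProduct_add, dotProduct_neg, add_dotProduct,
    ← mulVec_mulVec, mulVec_add, htr]
  ring

theorem NegDef.exists_krasovskii_le [DecidableEq n] {P Q Ac Ad : Matrix n n ℝ}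
    (hM : NegDef (krasovskiiMatrix P Q Ac Ad)) :
    ∃ ε > 0, ∀ u v : n → ℝ, (Ac *ᵥ u + Ad *ᵥ v) ⬝ᵥ P *ᵥ u + u ⬝ᵥ P *ᵥ (Ac *ᵥ u + Ad *ᵥ v)
      + (u ⬝ᵥ Q *ᵥ u - v ⬝ᵥ Q *ᵥ v) ≤ -(ε * (u ⬝ᵥ u)) := by
  obtain ⟨ε, hε, hle⟩ := Matrix.PosDef.exists_pos_mul_dotProduct_le hM
  refine ⟨ε, hε, fun u v => ?_⟩
  have h := hle (u ⊕ᵥ v)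
  rw [neg_mulVec, dotProduct_neg, dotProduct_krasovskiiMatrix, sumElim_dotProduct_sumElim] at h
  have hv : 0 ≤ v ⬝ᵥ v := by simpa using dotProduct_star_self_nonneg v
  nlinarith [mul_nonneg hε.le hv]

end LMI

theorem RobustLMI.negDef_krasovskiiMatrix {μ q : ℕ} {A : Fin μ → Matrix (Fin 2) (Fin 2) ℝ}
    {B : Fin μ → Matrix (Fin 2) (Fin 1) ℝ} {Ad : Matrix (Fin 2) (Fin 2) ℝ}
    {G : Matrix (Fin q) (Fin 2) ℝ} {H : Matrix (Fin q) (Fin 1) ℝ} {X W : Matrix (Fin 2) (Fin 2) ℝ}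
    {Y : Matrix (Fin 1) (Fin 2) ℝ} {γ : ℝ} (hLMI : RobustLMI μ q A B Ad G H X W Y γ)
    (hX : X.PosDef) {η : Fin μ → ℝ} (hη : InSimplex μ η) :
    NegDef (krasovskiiMatrix X⁻¹ (X⁻¹ * W * X⁻¹)
      ((∑ i, η i • A i) + (∑ i, η i • B i) * (Y * X⁻¹)) Ad) := by
  have hconv := NegDef.sum_smul hη (M := fun i => lmiBlock Ad X W Y (A i) (B i))
    fun i => (hLMI i).fromBlocks₁₁
  rw [sum_smul_lmiBlock hη.2] at hconv
  have hU : IsUnit (fromBlocks X⁻¹ 0 0 X⁻¹ : Matrix (Fin 2 ⊕ Fin 2) (Fin 2 ⊕ Fin 2) ℝ) := by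
    rw [isUnit_iff_isUnit_det, det_fromBlocks_zero₂₁, isUnit_iff_ne_zero]
    exact mul_ne_zero hX.inv.det_pos.ne' hX.inv.det_pos.ne'
  rw [← lmiBlock_conj hX]
  exact hconv.conj hU

section DelaySystem

variable {n : Type*} [Fintype n]

theorem exists_continuous_extension_of_delaySolution {Ac Ad : Matrix n n ℝ} {τ : ℝ} (hτ : 0 < τ)
    {x : ℝ → EuclideanSpace ℝ n} (hxc : ContinuousOn x (Ici (-τ)))
    (hx : ∀ t ≥ 0, HasDerivAt x (WithLp.toLp 2 (Ac *ᵥ x t + Ad *ᵥ x (t - τ))) t) :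
    ∃ y : ℝ → n → ℝ, Continuous y ∧ (∀ t ≥ -τ, y t = x t) ∧
      ∀ t ≥ 0, HasDerivAt y (Ac *ᵥ y t + Ad *ᵥ y (t - τ)) t := by
  refine ⟨fun t => x (max t (-τ)), ?_, fun t ht => by simp [max_eq_left ht], fun t ht => ?_⟩
  · exact (PiLp.continuous_ofLp 2 _).comp
      (hxc.comp_continuous (continuous_id.max continuous_const) fun t => le_max_right t (-τ))
  · have hev : (fun s => (x (max s (-τ)) : n → ℝ)) =ᶠ[𝓝 t] fun s => x s := by
      filter_upwards [Ioi_mem_nhds (show -τ < t by linarith)] with s hs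
      rw [max_eq_left hs.le]
    dsimp only
    rw [max_eq_left (show -τ ≤ t by linarith), max_eq_left (show -τ ≤ t - τ by linarith)]
    exact ((EuclideanSpace.equiv n ℝ).hasFDerivAt.comp_hasDerivAt t (hx t ht)).congr_of_eventuallyEq
      hev

theorem tendsto_norm_zero_of_negDef_krasovskiiMatrix [DecidableEq n] {P Q Ac Ad : Matrix n n ℝ}
    (hP : P.PosDef) (hQ : Q.PosSemidef) (hM : NegDef (krasovskiiMatrix P Q Ac Ad)) {τ : ℝ}
    (hτ : 0 < τ)
    {x : ℝ → EuclideanSpace ℝ n} (hxc : ContinuousOn x (Ici (-τ)))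
    (hx : ∀ t ≥ 0, HasDerivAt x (WithLp.toLp 2 (Ac *ᵥ x t + Ad *ᵥ x (t - τ))) t) :
    Tendsto (fun t => ‖x t‖) atTop (𝓝 0) := by
  obtain ⟨y, hyc, hyx, hyd⟩ := exists_continuous_extension_of_delaySolution hτ hxc hx
  obtain ⟨ε, hε, hεM⟩ := hM.exists_krasovskii_le
  obtain ⟨c, hc, hcP⟩ := hP.exists_pos_mul_dotProduct_le
  obtain ⟨C, hCP⟩ := hP.isHermitian.exists_dotProduct_mulVec_le
  obtain ⟨K, hKQ⟩ := hQ.isHermitian.exists_dotProduct_mulVec_le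
  have hy : Tendsto (fun t => y t ⬝ᵥ y t) atTop (𝓝 0) :=
    tendsto_zero_of_lyapunovKrasovskii (g := fun t => y t ⬝ᵥ P *ᵥ y t)
      (f := fun t => y t ⬝ᵥ Q *ᵥ y t) hτ.le hε hc (hyc.dotProduct hyc)
      (hyc.dotProduct (continuous_const.matrix_mulVec hyc))
      (fun t => by simpa using dotProduct_star_self_nonneg (y t))
      (fun t => by simpa using hQ.dotProduct_mulVec_nonneg (y t))
      (fun t => hKQ (y t)) (fun t => hcP (y t)) (fun t => hCP (y t))
      (fun t ht => (hyd t ht).dotProduct ((hyd t ht).mulVec P)) fun t _ => hεM _ _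
  refine (by simpa using hy.sqrt : Tendsto (fun t => √(y t ⬝ᵥ y t)) atTop (𝓝 0)).congr' ?_
  filter_upwards [eventually_ge_atTop (-τ)] with t ht
  rw [hyx t ht, EuclideanSpace.norm_eq]
  simp [dotProduct, sq]

end DelaySystem

theorem robust_asymptotic_stability_general
    (μ q : ℕ)
    (A : Fin μ → Matrix (Fin 2) (Fin 2) ℝ) (B : Fin μ → Matrix (Fin 2) (Fin 1) ℝ)
    (Ad : Matrix (Fin 2) (Fin 2) ℝ)
    (G : Matrix (Fin q) (Fin 2) ℝ) (H : Matrix (Fin q) (Fin 1) ℝ)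
    (τ : ℝ) (hτ : 0 < τ)
    (X W : Matrix (Fin 2) (Fin 2) ℝ) (hX : X.PosDef) (hW : W.PosDef)
    (Y : Matrix (Fin 1) (Fin 2) ℝ) (γ : ℝ)
    (hLMI : RobustLMI μ q A B Ad G H X W Y γ)
    (η : Fin μ → ℝ) (hη : InSimplex μ η)
    (x : ℝ → EuclideanSpace ℝ (Fin 2))
    (hx : IsClosedLoopSolution μ A B Ad (Y * X⁻¹) τ η x) :
    Filter.Tendsto (fun t => ‖x t‖) Filter.atTop (nhds 0) := by
  have hQ : (X⁻¹ * W * X⁻¹).PosSemidef := by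
    have := hW.posSemidef.conjTranspose_mul_mul_same X⁻¹
    rwa [hX.inv.isHermitian.eq] at this
  exact tendsto_norm_zero_of_negDef_krasovskiiMatrix hX.inv hQ
    (hLMI.negDef_krasovskiiMatrix hX hη) hτ hx.1 hx.2

/-- under the robust LMIs, every closed-loop solution (for any `η`
in the uncertainty simplex) converges to zero. -/
theorem robust_asymptotic_stability
    (μ q : ℕ) (hμ : 1 ≤ μ)
    (A : Fin μ → Matrix (Fin 2) (Fin 2) ℝ) (B : Fin μ → Matrix (Fin 2) (Fin 1) ℝ)
    (Ad : Matrix (Fin 2) (Fin 2) ℝ)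
    (G : Matrix (Fin q) (Fin 2) ℝ) (H : Matrix (Fin q) (Fin 1) ℝ)
    (τ : ℝ) (hτ : 0 < τ)
    (X W : Matrix (Fin 2) (Fin 2) ℝ) (hX : X.PosDef) (hW : W.PosDef)
    (Y : Matrix (Fin 1) (Fin 2) ℝ) (γ : ℝ) (hγ : 0 < γ)
    (hLMI : RobustLMI μ q A B Ad G H X W Y γ)
    (η : Fin μ → ℝ) (hη : InSimplex μ η)
    (x : ℝ → EuclideanSpace ℝ (Fin 2))
    (hx : IsClosedLoopSolution μ A B Ad (Y * X⁻¹) τ η x) :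
    Filter.Tendsto (fun t => ‖x t‖) Filter.atTop (nhds 0) :=
  robust_asymptotic_stability_general μ q A B Ad G H τ hτ X W hX hW Y γ hLMI η hη x hx
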